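/- arXiv:2002.02578 — 2 statements merged into one kernel-verified Lean document; each statement's English description precedes it below -/
import Mathlib

section
/- Let r ≥ 4 and α ∈ (0,1), and let G be a graph with n vertices such that for every pair of disjoint sets X, Y ⊆ V(G), each of size at least αn, there exists a copy of K_{r+1}^− in G with one vertex of degree r−1 in X and all other vertices in Y. Then G contains an (r, ℓ)-chain for every nonnegative integer ℓ < (1 − (r+2)α)·n/r. -/
/-!
Statement 10 (Lemma 4.4): let `r ≥ 4`, `α ∈ (0,1)`, and let `G` be a graph on `n`
vertices such that for all disjoint `X, Y ⊆ V(G)` of size at least `αn` each, there is a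
copy of `K_{r+1}⁻` in `G` with one vertex of degree `r-1` in `X` and all other vertices
in `Y`.  Then `G` contains an `(r, ℓ)`-chain for every `ℓ < (1 - (r+2)α)n/r`.
-/
open Finset

/-- The canonical `(r, ℓ)`-chain: the graph on vertex set `{0, 1, …, rℓ}` obtained by
sequentially gluing `ℓ` copies of `K_{r+1}⁻` (the complete graph on `r+1` vertices minus
one edge).  The `j`-th copy (for `0 ≤ j < ℓ`) lives on the vertices `{rj, …, r(j+1)}`,
its missing edge being `{rj, r(j+1)}`; consecutive copies are glued at the common vertex,
which is a degree-`(r-1)` endpoint of the missing edge in both copies.  The `(r,0)`-chain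
is a single vertex. -/
def chainGraph (r ℓ : ℕ) : SimpleGraph (Fin (r * ℓ + 1)) where
  Adj a b := a ≠ b ∧ ∃ j : ℕ, j < ℓ ∧
    r * j ≤ a.val ∧ a.val ≤ r * (j + 1) ∧ r * j ≤ b.val ∧ b.val ≤ r * (j + 1) ∧
    ¬(a.val = r * j ∧ b.val = r * (j + 1)) ∧ ¬(b.val = r * j ∧ a.val = r * (j + 1))
  symm := by
    constructor
    rintro a b ⟨hne, j, hj, h1, h2, h3, h4, h5, h6⟩
    exact ⟨hne.symm, j, hj, h3, h4, h1, h2, h6, h5⟩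
  loopless := by constructor; rintro a ⟨hne, -⟩; exact hne rfl

/-- The set of removable vertices of the canonical `(r, ℓ)`-chain: the `ℓ - 1` shared
(identified) degree-`(r-1)` vertices together with the two unidentified endpoints of the
missing edges of the first and last copy of `K_{r+1}⁻`; in the canonical labelling these
are exactly the multiples of `r`. -/
def chainR (r ℓ : ℕ) : Finset (Fin (r * ℓ + 1)) :=
  Finset.univ.filter (fun v => r ∣ v.val)

/-- `φ` is an embedding of the `(r, ℓ)`-chain into `G` as a subgraph (a copy of the
`(r, ℓ)`-chain in `G`). -/
def IsChainEmb {V : Type} (G : SimpleGraph V) (r ℓ : ℕ) (φ : Fin (r * ℓ + 1) → V) : Prop :=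
  Function.Injective φ ∧ ∀ a b, (chainGraph r ℓ).Adj a b → G.Adj (φ a) (φ b)

/-- The subgraph of `G` induced by the vertex set `U` contains a `K_r`-factor. -/
def HasKrFactorOn {V : Type} [DecidableEq V] (G : SimpleGraph V) (r : ℕ)
    (U : Finset V) : Prop :=
  ∃ P : Finset (Finset V),
    (∀ S ∈ P, G.IsNClique r S) ∧
    (∀ S ∈ P, ∀ T ∈ P, S ≠ T → Disjoint S T) ∧
    P.biUnion id = U

/-!
Run a depth-first search for the chain. Besides the chain found so far we keep the set `U` of
visited vertices and a set `D ⊆ U` of discarded vertices, none of which is the degree-`(r-1)`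
vertex of a copy of `K_{r+1}⁻` with its other vertices outside `U`. If the last vertex of the
chain is such a vertex, the chain is extended by `r` unvisited vertices; otherwise it is
discarded and the search backtracks by one copy (or restarts at an unvisited vertex). Since
`|U| ≤ rk + 1 + r|D|` for a chain of `k` copies, as long as `k < ℓ` and `|D| < αn` at least `αn`
vertices are unvisited, so the hypothesis applied to `D` and the unvisited vertices keeps
`|D| < αn`. Each step increases `k + 2|D|`, which is bounded, so the search reaches `k = ℓ`.
-/

/-- The adjacency relation of `chainGraph r k`, transported to `ℕ`. -/
def chainAdj (r k a b : ℕ) : Prop :=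
  a ≠ b ∧ ∃ j < k, r * j ≤ a ∧ a ≤ r * (j + 1) ∧ r * j ≤ b ∧ b ≤ r * (j + 1) ∧
    ¬(a = r * j ∧ b = r * (j + 1)) ∧ ¬(b = r * j ∧ a = r * (j + 1))

section chainAdj

variable {r k a b : ℕ}

theorem chainAdj.le (h : chainAdj r k a b) : a ≤ r * k ∧ b ≤ r * k := by
  obtain ⟨-, j, hj, -, ha, -, hb, -⟩ := h
  have : r * (j + 1) ≤ r * k := Nat.mul_le_mul_left r hj
  omega

theorem chainAdj.mono {k' : ℕ} (h : chainAdj r k a b) (hk : k ≤ k') : chainAdj r k' a b := by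
  obtain ⟨hne, j, hj, rest⟩ := h
  exact ⟨hne, j, hj.trans_le hk, rest⟩

theorem chainAdj_succ (h : chainAdj r (k + 1) a b) :
    chainAdj r k a b ∨ (a ≠ b ∧ r * k ≤ a ∧ a ≤ r * (k + 1) ∧ r * k ≤ b ∧ b ≤ r * (k + 1) ∧
      ¬(a = r * k ∧ b = r * (k + 1)) ∧ ¬(b = r * k ∧ a = r * (k + 1))) := by
  obtain ⟨hne, j, hj, rest⟩ := h
  rcases Nat.lt_succ_iff_lt_or_eq.1 hj with hj | rfl
  · exact Or.inl ⟨hne, j, hj, rest⟩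
  · exact Or.inr ⟨hne, rest⟩

end chainAdj

theorem exists_of_bounded_progress {σ : Type*} {P Q : σ → Prop} (μ : σ → ℕ) (B : ℕ)
    (hB : ∀ s, P s → μ s ≤ B) (hstep : ∀ s, P s → ¬Q s → ∃ s', P s' ∧ μ s < μ s')
    {s₀ : σ} (h₀ : P s₀) : ∃ s, P s ∧ Q s := by
  induction hm : B - μ s₀ using Nat.strong_induction_on generalizing s₀ with
  | _ m ih =>
    by_cases hQ : Q s₀
    · exact ⟨s₀, h₀, hQ⟩
    obtain ⟨s, hs, hlt⟩ := hstep s₀ h₀ hQ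
    exact ih (B - μ s) (by have := hB s hs; omega) hs rfl

section

variable {V : Type*} (G : SimpleGraph V) (r : ℕ)

def IsChainMap (k : ℕ) (f : ℕ → V) : Prop :=
  Set.InjOn f (Set.Iic (r * k)) ∧ ∀ a b, chainAdj r k a b → G.Adj (f a) (f b)

def HasAnchoredCopy (x : V) (Y : Finset V) : Prop :=
  ∃ S ⊆ Y, G.IsNClique r S ∧ ∃ y ∈ S, ∀ z ∈ S, z ≠ y → G.Adj x z

def AnchoredCopyDense (β : ℝ) : Prop :=
  ∀ X Y : Finset V, Disjoint X Y → β ≤ #X → β ≤ #Y → ∃ x ∈ X, HasAnchoredCopy G r x Y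

variable {G r} {k : ℕ} {f : ℕ → V}

theorem isChainMap_const (v : V) : IsChainMap G r 0 (fun _ => v) := by
  refine ⟨fun a ha b hb _ => ?_, fun a b ⟨_, j, hj, _⟩ => absurd hj j.not_lt_zero⟩
  simp_all

theorem IsChainMap.mono {k' : ℕ} (hf : IsChainMap G r k f) (hk : k' ≤ k) :
    IsChainMap G r k' f :=
  ⟨hf.1.mono (Set.Iic_subset_Iic.2 (Nat.mul_le_mul_left r hk)), fun a b h => hf.2 a b (h.mono hk)⟩

theorem HasAnchoredCopy.mono {x : V} {Y Y' : Finset V} (h : HasAnchoredCopy G r x Y)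
    (hY : Y ⊆ Y') : HasAnchoredCopy G r x Y' :=
  let ⟨S, hSY, rest⟩ := h
  ⟨S, hSY.trans hY, rest⟩

theorem AnchoredCopyDense.card_lt {β : ℝ} (H : AnchoredCopyDense G r β) {X Y : Finset V}
    (hXY : Disjoint X Y) (hY : β ≤ #Y) (hX : ∀ x ∈ X, ¬HasAnchoredCopy G r x Y) : #X < β := by
  by_contra! hβ
  obtain ⟨x, hx, hxY⟩ := H X Y hXY hβ hY
  exact hX x hx hxY

end

section

variable {V : Type*} [DecidableEq V]

theorem exists_injOn_Ioc_of_mem (m : ℕ) {S : Finset V} {y : V} (hy : y ∈ S) :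
    ∃ g : ℕ → V, Set.InjOn g (Set.Ioc m (m + #S)) ∧ Set.MapsTo g (Set.Ioc m (m + #S)) S ∧
      g (m + #S) = y := by
  have : Nonempty V := ⟨y⟩
  obtain ⟨g, hmaps, hinj⟩ := (Set.finite_Ioo m (m + #S)).exists_injOn_of_encard_le
    (t := (S.erase y : Set V)) (by
      rw [← coe_Ioo, Set.encard_coe_eq_coe_finsetCard, Set.encard_coe_eq_coe_finsetCard]
      simp [card_erase_of_mem hy])
  have hlast : m + #S ∉ Set.Ioo m (m + #S) := fun h => h.2.false
  have hg : Set.EqOn (Function.update g (m + #S) y) g (Set.Ioo m (m + #S)) :=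
    fun i hi => Function.update_of_ne (ne_of_mem_of_not_mem hi hlast) _ _
  refine ⟨Function.update g (m + #S) y, ?_, ?_, by simp⟩
  all_goals rw [← Set.Ioo_insert_right (by have := card_pos.2 ⟨y, hy⟩; omega)]
  · rw [Set.injOn_insert hlast, hg.injOn_iff, hg.image_eq]
    refine ⟨hinj, ?_⟩
    rintro ⟨i, hi, hiy⟩
    simpa [hiy] using hmaps hi
  · rintro i (rfl | hi)
    · simpa using hy
    · rw [hg hi]
      exact mem_of_mem_erase (hmaps hi)

variable {G : SimpleGraph V} {r k : ℕ} {f : ℕ → V}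

theorem IsChainMap.exists_extend (hf : IsChainMap G r k f) {S : Finset V} (hS : G.IsNClique r S)
    {y : V} (hy : y ∈ S) (hadj : ∀ z ∈ S, z ≠ y → G.Adj (f (r * k)) z)
    (hfS : ∀ a ≤ r * k, f a ∉ S) :
    ∃ f', IsChainMap G r (k + 1) f' ∧ (∀ a ≤ r * k, f' a = f a) ∧
      ∀ a ≤ r * (k + 1), r * k < a → f' a ∈ S := by
  -- the missing edge of the new copy joins the tip `f (r * k)` to `y`, so `y` must come last
  obtain ⟨g, hg_inj, hg_maps, hg_last⟩ := exists_injOn_Ioc_of_mem (r * k) hy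
  rw [hS.card_eq, ← Nat.mul_succ] at hg_inj hg_maps hg_last
  set f' : ℕ → V := fun a => if a ≤ r * k then f a else g a
  have hold : ∀ a ≤ r * k, f' a = f a := fun a ha => if_pos ha
  have hnew : ∀ a ≤ r * (k + 1), r * k < a → f' a = g a := fun a _ ha => if_neg (by omega)
  have hnewS : ∀ a ≤ r * (k + 1), r * k < a → f' a ∈ S := fun a ha₁ ha₂ => by
    rw [hnew a ha₁ ha₂]; exact hg_maps ⟨ha₂, ha₁⟩
  have hinj : Set.InjOn f' (Set.Iic (r * (k + 1))) := by
    intro a (ha : a ≤ _) b (hb : b ≤ _) hab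
    by_cases ha' : a ≤ r * k <;> by_cases hb' : b ≤ r * k
    · rw [hold a ha', hold b hb'] at hab
      exact hf.1 ha' hb' hab
    · exact absurd (hold a ha' ▸ hab ▸ hnewS b hb (by omega)) (hfS a ha')
    · exact absurd (hold b hb' ▸ hab.symm ▸ hnewS a ha (by omega)) (hfS b hb')
    · rw [hnew a ha (by omega), hnew b hb (by omega)] at hab
      exact hg_inj ⟨by omega, ha⟩ ⟨by omega, hb⟩ hab
  have htip : ∀ b, r * k < b → b < r * (k + 1) → G.Adj (f' (r * k)) (f' b) := by
    intro b hb₁ hb₂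
    have hlast : f' (r * (k + 1)) = y := by rw [hnew _ le_rfl (by omega), hg_last]
    rw [hold _ le_rfl]
    refine hadj _ (hnewS b hb₂.le hb₁) fun h => hb₂.ne ?_
    exact hinj (Set.mem_Iic.2 hb₂.le) (Set.mem_Iic.2 le_rfl) (h.trans hlast.symm)
  refine ⟨f', ⟨hinj, fun a b hab => ?_⟩, hold, hnewS⟩
  rcases chainAdj_succ hab with hab | ⟨hne, ha₁, ha₂, hb₁, hb₂, hm, hm'⟩
  · rw [hold a hab.le.1, hold b hab.le.2]
    exact hf.2 a b hab
  rcases ha₁.eq_or_lt with rfl | ha₁ <;> rcases hb₁.eq_or_lt with rfl | hb₁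
  · exact absurd rfl hne
  · exact htip b hb₁ (hb₂.lt_of_ne fun h => hm ⟨rfl, h⟩)
  · exact (htip a ha₁ (ha₂.lt_of_ne fun h => hm' ⟨rfl, h⟩)).symm
  · exact hS.isClique (hnewS a ha₂ ha₁) (hnewS b hb₂ hb₁) (hinj.ne ha₂ hb₂ hne)

end

section

variable {V : Type*} [DecidableEq V] [Fintype V] (G : SimpleGraph V) (r : ℕ)

structure SearchState where
  k : ℕ
  f : ℕ → V
  U : Finset V
  D : Finset V
  isChainMap : IsChainMap G r k f
  chain_mem : ∀ a ≤ r * k, f a ∈ U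
  chain_notMem : ∀ a ≤ r * k, f a ∉ D
  D_subset : D ⊆ U
  not_hasAnchoredCopy : ∀ x ∈ D, ¬HasAnchoredCopy G r x Uᶜ
  card_U_le : #U ≤ r * k + 1 + r * #D

namespace SearchState

variable {G r}

def initial (v : V) : SearchState G r where
  k := 0
  f := fun _ => v
  U := {v}
  D := ∅
  isChainMap := isChainMap_const v
  chain_mem _ _ := mem_singleton_self v
  chain_notMem _ _ := notMem_empty v
  D_subset := empty_subset _
  not_hasAnchoredCopy _ h := absurd h (notMem_empty _)
  card_U_le := by simp

def tip (s : SearchState G r) : V := s.f (r * s.k)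

variable (s : SearchState G r)

theorem tip_mem_U : s.tip ∈ s.U := s.chain_mem _ le_rfl

theorem tip_notMem_D : s.tip ∉ s.D := s.chain_notMem _ le_rfl

theorem not_hasAnchoredCopy_insert_tip (hx : ¬HasAnchoredCopy G r s.tip s.Uᶜ) :
    ∀ x ∈ insert s.tip s.D, ¬HasAnchoredCopy G r x s.Uᶜ := fun x hx' => by
  rcases mem_insert.1 hx' with rfl | hxD
  exacts [hx, s.not_hasAnchoredCopy x hxD]

theorem exists_extend (h : HasAnchoredCopy G r s.tip s.Uᶜ) :
    ∃ s' : SearchState G r, s'.k = s.k + 1 ∧ s'.D = s.D := by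
  obtain ⟨S, hSU, hS, y, hy, hadj⟩ := h
  have hSU' : ∀ z ∈ S, z ∉ s.U := fun z hz => mem_compl.1 (hSU hz)
  obtain ⟨f', hf', hold, hnew⟩ := s.isChainMap.exists_extend hS hy hadj
    fun a ha haS => hSU' _ haS (s.chain_mem a ha)
  have hmem : ∀ a ≤ r * (s.k + 1), a ≤ r * s.k ∨ f' a ∈ S := fun a ha =>
    (le_or_gt a (r * s.k)).imp_right (hnew a ha)
  refine ⟨⟨s.k + 1, f', s.U ∪ S, s.D, hf', fun a ha => ?_, fun a ha => ?_,
    s.D_subset.trans subset_union_left, fun x hx hxS => ?_, ?_⟩, rfl, rfl⟩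
  · rcases hmem a ha with ha | ha
    · exact mem_union_left _ (hold a ha ▸ s.chain_mem a ha)
    · exact mem_union_right _ ha
  · rcases hmem a ha with ha | ha
    · exact hold a ha ▸ s.chain_notMem a ha
    · exact fun haD => hSU' _ ha (s.D_subset haD)
  · exact s.not_hasAnchoredCopy x hx (hxS.mono (compl_subset_compl.2 subset_union_left))
  · calc #(s.U ∪ S) ≤ #s.U + #S := card_union_le _ _
      _ ≤ r * s.k + 1 + r * #s.D + r := by rw [hS.card_eq]; linarith [s.card_U_le]
      _ = r * (s.k + 1) + 1 + r * #s.D := by ring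

theorem exists_backtrack (hr : 0 < r) (hx : ¬HasAnchoredCopy G r s.tip s.Uᶜ) {k : ℕ}
    (hk : s.k = k + 1) : ∃ s' : SearchState G r, s'.k = k ∧ s'.D = insert s.tip s.D := by
  have hle : r * k ≤ r * s.k := Nat.mul_le_mul_left r (by omega)
  refine ⟨⟨k, s.f, s.U, insert s.tip s.D, s.isChainMap.mono (by omega),
    fun a ha => s.chain_mem a (ha.trans hle), fun a ha => ?_,
    insert_subset s.tip_mem_U s.D_subset, s.not_hasAnchoredCopy_insert_tip hx,
    ?_⟩, rfl, rfl⟩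
  · intro h
    rcases mem_insert.1 h with h | h
    · have := s.isChainMap.1 (Set.mem_Iic.2 (ha.trans hle)) (Set.mem_Iic.2 le_rfl) h
      have : r * k < r * s.k := Nat.mul_lt_mul_of_pos_left (by omega) hr
      omega
    · exact s.chain_notMem a (ha.trans hle) h
  · rw [card_insert_of_notMem s.tip_notMem_D]
    have := s.card_U_le
    rw [hk] at this
    linarith

theorem exists_restart (hr : 0 < r) (hx : ¬HasAnchoredCopy G r s.tip s.Uᶜ) (hk : s.k = 0)
    {w : V} (hw : w ∉ s.U) : ∃ s' : SearchState G r, s'.k = 0 ∧ s'.D = insert s.tip s.D := by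
  have hsub : insert s.tip s.D ⊆ s.U := insert_subset s.tip_mem_U s.D_subset
  refine ⟨⟨0, fun _ => w, insert w s.U, insert s.tip s.D, isChainMap_const w,
    fun _ _ => mem_insert_self w s.U, fun _ _ h => hw (hsub h), hsub.trans (subset_insert _ _),
    fun x hx' hxw => ?_, ?_⟩, rfl, rfl⟩
  · exact s.not_hasAnchoredCopy_insert_tip hx x hx'
      (hxw.mono (compl_subset_compl.2 (subset_insert _ _)))
  · rw [card_insert_of_notMem s.tip_notMem_D]
    have := s.card_U_le
    rw [hk] at this
    have := card_insert_le w s.U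
    nlinarith

theorem exists_discard (hr : 0 < r) (hx : ¬HasAnchoredCopy G r s.tip s.Uᶜ)
    (hU : s.Uᶜ.Nonempty) :
    ∃ s' : SearchState G r, s'.k ≤ s.k ∧ s.k ≤ s'.k + 1 ∧ s'.D = insert s.tip s.D := by
  cases hk : s.k with
  | zero =>
    obtain ⟨w, hw⟩ := hU
    obtain ⟨s', hk', hD'⟩ := s.exists_restart hr hx hk (mem_compl.1 hw)
    exact ⟨s', by omega, by omega, hD'⟩
  | succ k =>
    obtain ⟨s', hk', hD'⟩ := s.exists_backtrack hr hx hk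
    exact ⟨s', by omega, by omega, hD'⟩

theorem le_card_compl_U {ℓ : ℕ} {β : ℝ} (hr : 0 < r) (hβ : 0 < β)
    (hk : s.k < ℓ) (hD : #s.D < β) (hline : r * ℓ + (r + 2) * β < Fintype.card V) :
    β ≤ #s.Uᶜ := by
  have hU : #s.U ≤ r * ℓ + r * #s.D := by nlinarith [Nat.mul_le_mul_left r hk, s.card_U_le]
  have hcard : (#s.U : ℝ) + #s.Uᶜ = Fintype.card V := by exact_mod_cast card_add_card_compl s.U
  have hrD : (r : ℝ) * #s.D ≤ r * β := mul_le_mul_of_nonneg_left hD.le (Nat.cast_nonneg r)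
  have : (#s.U : ℝ) ≤ r * ℓ + r * #s.D := by exact_mod_cast hU
  linarith

end SearchState

variable {G r} {ℓ : ℕ} {β : ℝ}

theorem exists_isChainMap (hr : 0 < r) (hβ : 0 < β) (H : AnchoredCopyDense G r β)
    (hline : r * ℓ + (r + 2) * β < Fintype.card V) : ∃ f, IsChainMap G r ℓ f := by
  have : Nonempty V := Fintype.card_pos_iff.1 <| by
    have : (0 : ℝ) < Fintype.card V := by nlinarith [(Nat.cast_nonneg (r * ℓ) : (0 : ℝ) ≤ _)]
    exact_mod_cast this
  have hstep (s : SearchState G r) (hs : s.k ≤ ℓ ∧ #s.D < β) (hk : ¬ℓ ≤ s.k) :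
      ∃ s' : SearchState G r, (s'.k ≤ ℓ ∧ #s'.D < β) ∧
        s.k + 2 * #s.D < s'.k + 2 * #s'.D := by
    have hY := s.le_card_compl_U hr hβ (not_le.1 hk) hs.2 hline
    by_cases hx : HasAnchoredCopy G r s.tip s.Uᶜ
    · obtain ⟨s', hk', hD'⟩ := s.exists_extend hx
      exact ⟨s', ⟨by omega, hD' ▸ hs.2⟩, by rw [hk', hD']; omega⟩
    obtain ⟨s', hk₁, hk₂, hD'⟩ :=
      s.exists_discard hr hx (card_pos.1 (by exact_mod_cast hβ.trans_le hY))
    have hD'β : #s'.D < β := hD' ▸ H.card_lt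
      (disjoint_compl_right_iff.2 (insert_subset s.tip_mem_U s.D_subset)) hY
      (s.not_hasAnchoredCopy_insert_tip hx)
    refine ⟨s', ⟨hk₁.trans hs.1, hD'β⟩, ?_⟩
    rw [hD', card_insert_of_notMem s.tip_notMem_D]
    omega
  obtain ⟨s, ⟨hkℓ, -⟩, hℓk⟩ :=
    exists_of_bounded_progress (fun s : SearchState G r => s.k + 2 * #s.D) (ℓ + 2 * Fintype.card V) (fun s hs => by have := card_le_univ s.D; omega) hstep
    (s₀ := SearchState.initial (Classical.arbitrary V))
    ⟨Nat.zero_le ℓ, by simpa [SearchState.initial] using hβ⟩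
  exact ⟨s.f, le_antisymm hkℓ hℓk ▸ s.isChainMap⟩

end

theorem IsChainMap.isChainEmb {V : Type} {G : SimpleGraph V} {r ℓ : ℕ} {f : ℕ → V}
    (hf : IsChainMap G r ℓ f) : IsChainEmb G r ℓ (fun i => f i) :=
  ⟨fun a b hab => Fin.ext (hf.1 (Nat.lt_succ_iff.1 a.isLt) (Nat.lt_succ_iff.1 b.isLt) hab),
    fun a b ⟨hne, rest⟩ => hf.2 a b ⟨Fin.val_injective.ne hne, rest⟩⟩

theorem statement_10 :
    ∀ r : ℕ, 4 ≤ r → ∀ α : ℝ, 0 < α → α < 1 →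
      ∀ (n : ℕ) (G : SimpleGraph (Fin n)),
        -- a copy of K_{r+1}⁻ with the degree-(r-1) vertex x ∈ X and all other
        -- vertices forming an r-clique S ⊆ Y, x joined to all of S except one vertex y
        (∀ X Y : Finset (Fin n), Disjoint X Y →
          α * (n : ℝ) ≤ (X.card : ℝ) → α * (n : ℝ) ≤ (Y.card : ℝ) →
          ∃ x ∈ X, ∃ S ⊆ Y, G.IsNClique r S ∧
            ∃ y ∈ S, ∀ z ∈ S, z ≠ y → G.Adj x z) →
        ∀ ℓ : ℕ, (ℓ : ℝ) < (1 - ((r : ℝ) + 2) * α) * (n : ℝ) / (r : ℝ) →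
          ∃ φ : Fin (r * ℓ + 1) → Fin n, IsChainEmb G r ℓ φ := by
  intro r hr α hα _ n G H ℓ hℓ
  have hr₀ : (0 : ℝ) < r := by exact_mod_cast (by omega : 0 < r)
  have hline : r * ℓ + (r + 2) * (α * n) < n := by nlinarith [(lt_div_iff₀ hr₀).1 hℓ]
  have hn : 0 < n := Nat.pos_of_ne_zero (by rintro rfl; simp at hℓ; linarith)
  obtain ⟨f, hf⟩ :=
    exists_isChainMap (by omega) (mul_pos hα (Nat.cast_pos.2 hn)) H (by simpa using hline)
  exact ⟨_, hf.isChainEmb⟩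
end

section
/- In every dynamic-board (𝓗, p, q)-game, Breaker has a strategy such that at the end of the game at most (1+q)·f(𝓗, p, q) hyperedges of 𝓗 have all their vertices claimed by Maker, where f(𝓗, p, q) = Σ_{H ∈ E(𝓗)} (1+q)^{−|H|/p}. -/
/-!
Statement 14 (Lemma 5.2): in every dynamic-board `(𝓗, p, q)`-game Breaker has a strategy
such that at the end of the game at most `(1+q)·f(𝓗,p,q)` hyperedges of `𝓗` have all
their vertices claimed by Maker, where `f(𝓗,p,q) = Σ_{H ∈ E(𝓗)} (1+q)^(-|H|/p)`.
-/

open Finset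
open scoped Classical

/-- A position in a dynamic-board game: the current board `V_i` together with the
elements claimed so far by Maker and by Breaker. -/
structure DynPos (α : Type) where
  board : Finset α
  maker : Finset α
  breaker : Finset α

variable {α : Type} [DecidableEq α]

/-- The elements of the current board not yet claimed by either player. -/
def DynPos.unclaimed (s : DynPos α) : Finset α := s.board \ (s.maker ∪ s.breaker)

/-- A move of Maker in a dynamic-board game: either claim a set of previously unclaimed
elements of the current board (Option (a)), or enlarge the board by a set of new elements
(Option (b)). -/
inductive DynMove (α : Type) where
  | claim (t : Finset α)
  | extend (t : Finset α)

/-- Maker's move in the dynamic-board `(𝓗, m, b)`-game with universe `U = V(𝓗)`.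
With Option (a) she claims up to `m` previously unclaimed elements of the current board;
with Option (b) she adds new elements of the universe to the board, claiming nothing.
An illegal move is auto-corrected to doing nothing (which also models the end of the
game from Maker's side). -/
def makerDynStep (U : Finset α) (m : ℕ) (SM : DynPos α → DynMove α)
    (s : DynPos α) : DynPos α :=
  match SM s with
  | .claim t =>
      if t ⊆ s.unclaimed ∧ t.card ≤ m then { s with maker := s.maker ∪ t } else s
  | .extend t => { s with board := s.board ∪ (t ∩ U) }

/-- Breaker's move: he claims up to `b` previously unclaimed elements of the current
board (an illegal suggestion is auto-corrected to doing nothing). -/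
def breakerDynStep (b : ℕ) (SB : DynPos α → Finset α) (s : DynPos α) : DynPos α :=
  if SB s ⊆ s.unclaimed ∧ (SB s).card ≤ b then { s with breaker := s.breaker ∪ SB s } else s

/-- One round of the dynamic-board `(𝓗, m, b)`-game: Maker moves, then Breaker moves. -/
def dynRound (U : Finset α) (m b : ℕ) (SM : DynPos α → DynMove α)
    (SB : DynPos α → Finset α) (s : DynPos α) : DynPos α :=
  breakerDynStep b SB (makerDynStep U m SM s)

/-- The position after `i` rounds of the dynamic-board game, starting from the empty
board `V₀ = ∅`. -/
def dynState (U : Finset α) (m b : ℕ) (SM : DynPos α → DynMove α)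
    (SB : DynPos α → Finset α) (i : ℕ) : DynPos α :=
  (dynRound U m b SM SB)^[i] ⟨∅, ∅, ∅⟩

/-- The total number of rounds after which the dynamic-board game on the universe `U` is
certainly over: each round in which anything happens either enlarges the board or claims
a board element, so `2|U| + 1` rounds always suffice. -/
def dynLength (U : Finset α) : ℕ := 2 * U.card + 1

/-- The final position of the dynamic-board game. -/
def dynFinal (U : Finset α) (m b : ℕ) (SM : DynPos α → DynMove α)
    (SB : DynPos α → Finset α) : DynPos α :=
  dynState U m b SM SB (dynLength U)

/-- Breaker wins the dynamic-board `(𝓗, m, b)`-game (universe `U`, hyperedge family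
`Wins`): he has a strategy such that whatever Maker does, at the end of the game Maker
has not claimed all elements of any hyperedge. -/
def BreakerWinsDyn (U : Finset α) (Wins : Set (Finset α)) (m b : ℕ) : Prop :=
  ∃ SB : DynPos α → Finset α, ∀ SM : DynPos α → DynMove α,
    ∀ W ∈ Wins, ¬ W ⊆ (dynFinal U m b SM SB).maker

/-- The edge set of the complete graph `K_n` on `Fin n`. -/
def knBoard (n : ℕ) : Finset (Sym2 (Fin n)) :=
  Finset.univ.filter (fun e => ¬ e.IsDiag)

/-- The winning sets of the `H`-game on `K_n`: the edge sets of copies of `H` in `K_n`. -/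
noncomputable def HCopies {k : ℕ} (H : SimpleGraph (Fin k)) (n : ℕ) :
    Set (Finset (Sym2 (Fin n))) :=
  { E | ∃ f : Fin k → Fin n, Function.Injective f ∧ E = H.edgeFinset.image (Sym2.map f) }

/-- `m₂(H) = max { (e(H')-1)/(v(H')-2) : H' ⊆ H, v(H') ≥ 3 }`, the maximum running over
subgraphs `H'` of `H` given by a vertex set `S` of size at least `3` and a set of edges of
`H` inside `S`. -/
noncomputable def m2 {V : Type} [Fintype V] [DecidableEq V] (H : SimpleGraph V) : ℝ :=
  sSup { x : ℝ | ∃ (H' : SimpleGraph V) (S : Finset V),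
    H' ≤ H ∧ (∀ e ∈ H'.edgeFinset, ∀ v ∈ e, v ∈ S) ∧ 3 ≤ S.card ∧
    x = ((H'.edgeFinset.card : ℝ) - 1) / ((S.card : ℝ) - 2) }

namespace S14

lemma rpow_le_one_add_mul {a t : ℝ} (ha : 1 ≤ a) (ht0 : 0 ≤ t) (ht1 : t ≤ 1) :
    a ^ t ≤ 1 + t * (a - 1) := by
  have ha0 : (0:ℝ) < a := lt_of_lt_of_le one_pos ha
  have h := convexOn_exp.2 (Set.mem_univ 0) (Set.mem_univ (Real.log a))
    (by linarith : (0:ℝ) ≤ 1 - t) ht0 (by ring)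
  simp only [smul_eq_mul, mul_zero, zero_add, Real.exp_zero, Real.exp_log ha0] at h
  rw [Real.rpow_def_of_pos ha0]
  calc Real.exp (Real.log a * t) = Real.exp (t * Real.log a) := by ring_nf
    _ ≤ (1 - t) * 1 + t * a := h
    _ = 1 + t * (a - 1) := by ring

variable {α : Type} [DecidableEq α]

noncomputable def trm (p q : ℕ) (M B W : Finset α) : ℝ :=
  if (W ∩ B).Nonempty then 0 else (1 + (q:ℝ)) ^ (-(((W \ M).card : ℝ) / (p:ℝ)))

noncomputable def phi (E : Finset (Finset α)) (p q : ℕ) (M B : Finset α) : ℝ :=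
  ∑ W ∈ E, trm p q M B W

noncomputable def wt (E : Finset (Finset α)) (p q : ℕ) (M B : Finset α) (v : α) : ℝ :=
  ∑ W ∈ E, if v ∈ W then trm p q M B W else 0

lemma trm_nonneg (p q : ℕ) (M B W : Finset α) : 0 ≤ trm p q M B W := by
  unfold trm; split
  · exact le_rfl
  · exact Real.rpow_nonneg (by positivity) _

lemma phi_nonneg (E : Finset (Finset α)) (p q : ℕ) (M B : Finset α) : 0 ≤ phi E p q M B :=
  Finset.sum_nonneg fun W _ => trm_nonneg p q M B W

lemma wt_nonneg (E : Finset (Finset α)) (p q : ℕ) (M B : Finset α) (v : α) :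
    0 ≤ wt E p q M B v := by
  refine Finset.sum_nonneg fun W _ => ?_
  split
  · exact trm_nonneg p q M B W
  · exact le_rfl

lemma wt_le_phi (E : Finset (Finset α)) (p q : ℕ) (M B : Finset α) (v : α) :
    wt E p q M B v ≤ phi E p q M B := by
  refine Finset.sum_le_sum fun W _ => ?_
  split
  · exact le_rfl
  · exact trm_nonneg p q M B W

lemma trm_mono {p q : ℕ} {M B B' W : Finset α} (h : B ⊆ B') :
    trm p q M B' W ≤ trm p q M B W := by
  unfold trm
  split
  · split
    · exact le_rfl
    · exact Real.rpow_nonneg (by positivity) _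
  · next h' =>
    rw [if_neg fun hne => h' (hne.mono (Finset.inter_subset_inter_left h))]

lemma phi_mono {E : Finset (Finset α)} {p q : ℕ} {M B B' : Finset α} (h : B ⊆ B') :
    phi E p q M B' ≤ phi E p q M B :=
  Finset.sum_le_sum fun W _ => trm_mono h

lemma wt_mono {E : Finset (Finset α)} {p q : ℕ} {M B B' : Finset α} (h : B ⊆ B') (v : α) :
    wt E p q M B' v ≤ wt E p q M B v := by
  refine Finset.sum_le_sum fun W _ => ?_
  split
  · exact trm_mono h
  · exact le_rfl

lemma trm_insert (p q : ℕ) (M B W : Finset α) (v : α) :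
    trm p q M (insert v B) W = if v ∈ W then 0 else trm p q M B W := by
  unfold trm
  by_cases hv : v ∈ W
  · rw [if_pos hv, if_pos ⟨v, Finset.mem_inter.2 ⟨hv, Finset.mem_insert_self v B⟩⟩]
  · rw [if_neg hv]
    have : W ∩ insert v B = W ∩ B := by
      ext x
      simp only [Finset.mem_inter, Finset.mem_insert]
      constructor
      · rintro ⟨hx, rfl | hx'⟩
        · exact absurd hx hv
        · exact ⟨hx, hx'⟩
      · rintro ⟨hx, hx'⟩; exact ⟨hx, Or.inr hx'⟩
    rw [this]

lemma phi_insert (E : Finset (Finset α)) (p q : ℕ) (M B : Finset α) (v : α) :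
    phi E p q M (insert v B) = phi E p q M B - wt E p q M B v := by
  unfold phi wt
  rw [← Finset.sum_sub_distrib]
  refine Finset.sum_congr rfl fun W _ => ?_
  rw [trm_insert]
  split
  · ring
  · ring


lemma trm_maker {p q : ℕ} (hp : 0 < p) {M B A W : Finset α} (hA : A.card ≤ p) :
    trm p q (M ∪ A) B W ≤
      trm p q M B W + (q:ℝ)/(p:ℝ) * ((((W \ M) ∩ A).card : ℝ) * trm p q M B W) := by
  unfold trm
  by_cases hB : (W ∩ B).Nonempty
  · rw [if_pos hB, if_pos hB]
    positivity
  · rw [if_neg hB, if_neg hB]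
    set k := (W \ M).card with hk
    set c := ((W \ M) ∩ A).card with hc
    have hck : c ≤ k := Finset.card_le_card Finset.inter_subset_left
    have hcp : c ≤ p := le_trans (Finset.card_le_card Finset.inter_subset_right) hA
    have hsd : W \ (M ∪ A) = (W \ M) \ ((W \ M) ∩ A) := by
      rw [Finset.sdiff_inter_self_left]
      ext x
      simp only [Finset.mem_sdiff, Finset.mem_union]
      tauto
    have hcard : (W \ (M ∪ A)).card = k - c := by
      rw [hsd, Finset.card_sdiff_of_subset Finset.inter_subset_left]
    rw [hcard]
    have hq0 : (0:ℝ) < 1 + (q:ℝ) := by positivity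
    have hexp : -(((k - c : ℕ) : ℝ) / (p:ℝ)) = -((k:ℝ)/(p:ℝ)) + (c:ℝ)/(p:ℝ) := by
      push_cast [hck]
      ring
    rw [hexp, Real.rpow_add hq0]
    set T := (1 + (q:ℝ)) ^ (-((k:ℝ)/(p:ℝ))) with hT
    have hT0 : 0 ≤ T := Real.rpow_nonneg (le_of_lt hq0) _
    have ht1 : (c:ℝ)/(p:ℝ) ≤ 1 := by
      rw [div_le_one (by exact_mod_cast hp)]
      exact_mod_cast hcp
    have key : (1 + (q:ℝ)) ^ ((c:ℝ)/(p:ℝ)) ≤ 1 + ((c:ℝ)/(p:ℝ)) * (q:ℝ) := by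
      have := rpow_le_one_add_mul (a := 1 + (q:ℝ)) (t := (c:ℝ)/(p:ℝ))
        (by linarith [Nat.cast_nonneg (α := ℝ) q]) (by positivity) ht1
      simpa using this
    calc T * (1 + (q:ℝ)) ^ ((c:ℝ)/(p:ℝ)) ≤ T * (1 + ((c:ℝ)/(p:ℝ)) * (q:ℝ)) :=
          mul_le_mul_of_nonneg_left key hT0
      _ = T + (q:ℝ)/(p:ℝ) * ((c:ℝ) * T) := by ring

lemma phi_maker {E : Finset (Finset α)} {p q : ℕ} (hp : 0 < p) {M B A : Finset α}
    (hA : A.card ≤ p) (hAM : Disjoint A M) :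
    phi E p q (M ∪ A) B ≤ phi E p q M B + (q:ℝ)/(p:ℝ) * ∑ a ∈ A, wt E p q M B a := by
  have hswap : ∑ a ∈ A, wt E p q M B a
      = ∑ W ∈ E, ∑ a ∈ A, (if a ∈ W then trm p q M B W else 0) := by
    unfold wt
    rw [Finset.sum_comm]
  rw [hswap, Finset.mul_sum]
  unfold phi
  rw [← Finset.sum_add_distrib]
  refine Finset.sum_le_sum fun W _ => ?_
  have hinner : ∑ a ∈ A, (if a ∈ W then trm p q M B W else 0)
      = (((W \ M) ∩ A).card : ℝ) * trm p q M B W := by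
    rw [← Finset.sum_filter, Finset.sum_const, Finset.filter_mem_eq_inter, nsmul_eq_mul]
    have hAW : A ∩ W = W \ M ∩ A := by
      ext x
      simp only [Finset.mem_sdiff, Finset.mem_inter]
      constructor
      · rintro ⟨hx, hw⟩
        exact ⟨⟨hw, fun hm => (Finset.disjoint_left.1 hAM) hx hm⟩, hx⟩
      · rintro ⟨⟨hw, _⟩, hx⟩
        exact ⟨hx, hw⟩
    rw [hAW]
  rw [hinner]
  exact trm_maker hp hA


noncomputable def greedy (E : Finset (Finset α)) (p q : ℕ) (M : Finset α) :
    ℕ → Finset α → Finset α → Finset α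
  | 0, _, _ => ∅
  | n+1, B, U =>
    if h : U.Nonempty then
      insert (Finset.exists_max_image U (wt E p q M B) h).choose
        (greedy E p q M n (insert (Finset.exists_max_image U (wt E p q M B) h).choose B)
          (U.erase (Finset.exists_max_image U (wt E p q M B) h).choose))
    else ∅

lemma greedy_subset (E : Finset (Finset α)) (p q : ℕ) (M : Finset α) :
    ∀ (n : ℕ) (B U : Finset α), greedy E p q M n B U ⊆ U := by
  intro n
  induction n with
  | zero => intro B U; simp [greedy]
  | succ n ih =>
    intro B U
    rw [greedy]
    split
    · next h =>
      obtain ⟨hv, -⟩ := (Finset.exists_max_image U (wt E p q M B) h).choose_spec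
      exact Finset.insert_subset hv
        ((ih _ _).trans ((Finset.erase_subset _ _)))
    · exact Finset.empty_subset U

lemma greedy_card (E : Finset (Finset α)) (p q : ℕ) (M : Finset α) :
    ∀ (n : ℕ) (B U : Finset α), (greedy E p q M n B U).card ≤ n := by
  intro n
  induction n with
  | zero => intro B U; simp [greedy]
  | succ n ih =>
    intro B U
    rw [greedy]
    split
    · exact le_trans (Finset.card_insert_le _ _) (Nat.succ_le_succ (ih _ _))
    · simp

lemma greedy_key (E : Finset (Finset α)) (p q : ℕ) (M : Finset α) :
    ∀ (n : ℕ) (B U : Finset α) (x : α), x ∈ U → x ∉ greedy E p q M n B U →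
      phi E p q M (B ∪ greedy E p q M n B U)
          + (n : ℝ) * wt E p q M (B ∪ greedy E p q M n B U) x
        ≤ phi E p q M B := by
  intro n
  induction n with
  | zero =>
    intro B U x _ _
    simp [greedy]
  | succ n ih =>
    intro B U x hxU hxG
    have h : U.Nonempty := ⟨x, hxU⟩
    rw [greedy] at hxG ⊢
    rw [dif_pos h] at hxG ⊢
    obtain ⟨hv, hmax⟩ := (Finset.exists_max_image U (wt E p q M B) h).choose_spec
    set v := (Finset.exists_max_image U (wt E p q M B) h).choose with hvdef
    set G' := greedy E p q M n (insert v B) (U.erase v) with hG'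
    have hxv : x ≠ v := fun hxv => hxG (hxv ▸ Finset.mem_insert_self v G')
    have hxG' : x ∉ G' := fun hx => hxG (Finset.mem_insert_of_mem hx)
    have hxU' : x ∈ U.erase v := Finset.mem_erase.2 ⟨hxv, hxU⟩
    have hBeq : B ∪ insert v G' = insert v B ∪ G' := by
      ext y
      simp only [Finset.mem_union, Finset.mem_insert]
      tauto
    have hIH := ih (insert v B) (U.erase v) x hxU' hxG'
    have hins := phi_insert E p q M B v
    have hw1 : wt E p q M (insert v B ∪ G') x ≤ wt E p q M B x :=
      wt_mono (fun y hy => Finset.mem_union_left _ (Finset.mem_insert_of_mem hy)) x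
    have hw2 : wt E p q M B x ≤ wt E p q M B v := hmax x hxU
    rw [hBeq]
    push_cast
    have hwn : (0:ℝ) ≤ (n:ℝ) := Nat.cast_nonneg n
    nlinarith [hIH, hins, hw1, hw2]

end S14


theorem statement_14 :
    ∀ (α : Type) (_ : Fintype α) (_ : DecidableEq α)
      (E : Finset (Finset α)) (p q : ℕ),
      ∃ SB : DynPos α → Finset α, ∀ SM : DynPos α → DynMove α,
        ((E.filter
            (fun W => W ⊆ (dynFinal (Finset.univ : Finset α) p q SM SB).maker)).card : ℝ) ≤
          (1 + (q : ℝ)) *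
            ∑ W ∈ E, ((1 + (q : ℝ)) ^ (-((W.card : ℝ) / (p : ℝ)))) := by
  intro α instF instD E p q
  have hq0 : (0:ℝ) ≤ (q:ℝ) := Nat.cast_nonneg q
  by_cases hp : p = 0
  · -- trivial case p = 0
    subst hp
    refine ⟨fun _ => ∅, fun SM => ?_⟩
    have hsum : ∑ W ∈ E, ((1 + (q : ℝ)) ^ (-((W.card : ℝ) / ((0:ℕ) : ℝ)))) = (E.card : ℝ) := by
      rw [Finset.sum_congr rfl (fun W _ => ?_), Finset.sum_const, nsmul_eq_mul, mul_one]
      norm_num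
    rw [hsum]
    have h1 : ((E.filter (fun W => W ⊆ (dynFinal (Finset.univ : Finset α) 0 q SM
        (fun _ => ∅)).maker)).card : ℝ) ≤ (E.card : ℝ) := by
      exact_mod_cast Finset.card_le_card (Finset.filter_subset _ _)
    nlinarith [Nat.cast_nonneg (α := ℝ) E.card]
  · have hp0 : 0 < p := Nat.pos_of_ne_zero hp
    have hp0R : (0:ℝ) < (p:ℝ) := by exact_mod_cast hp0
    set SB : DynPos α → Finset α :=
      (fun s => S14.greedy E p q s.maker q s.breaker s.unclaimed) with hSBdef
    refine ⟨SB, fun SM => ?_⟩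
    set st : ℕ → DynPos α := dynState (Finset.univ : Finset α) p q SM SB with hstdef
    have hst0 : st 0 = ⟨∅, ∅, ∅⟩ := rfl
    have hst_succ : ∀ i, st (i+1)
        = breakerDynStep q SB (makerDynStep (Finset.univ : Finset α) p SM (st i)) := by
      intro i
      show (dynRound (Finset.univ : Finset α) p q SM SB)^[i+1] ⟨∅,∅,∅⟩ = _
      rw [Function.iterate_succ_apply']
      rfl
    have hbreak : ∀ s : DynPos α,
        breakerDynStep q SB s = { s with breaker := s.breaker ∪ SB s } := by
      intro s
      unfold breakerDynStep
      rw [if_pos ⟨S14.greedy_subset E p q s.maker q s.breaker s.unclaimed,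
        S14.greedy_card E p q s.maker q s.breaker s.unclaimed⟩]
    have hmaker : ∀ s : DynPos α,
        (∃ t : Finset α, t ⊆ s.unclaimed ∧ t.card ≤ p ∧
          makerDynStep (Finset.univ : Finset α) p SM s = { s with maker := s.maker ∪ t }) ∨
        ((makerDynStep (Finset.univ : Finset α) p SM s).maker = s.maker ∧
         (makerDynStep (Finset.univ : Finset α) p SM s).breaker = s.breaker) := by
      intro s
      rcases hSM : SM s with t | t
      · by_cases hcond : t ⊆ s.unclaimed ∧ t.card ≤ p
        · left
          exact ⟨t, hcond.1, hcond.2, by simp only [makerDynStep, hSM, if_pos hcond]⟩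
        · right
          constructor <;> simp [makerDynStep, hSM, hcond]
      · right
        constructor <;> simp [makerDynStep, hSM]
    have hmaker_board : ∀ s : DynPos α,
        (makerDynStep (Finset.univ : Finset α) p SM s).maker = s.maker ∨
        (makerDynStep (Finset.univ : Finset α) p SM s)
            = { s with maker := (makerDynStep (Finset.univ : Finset α) p SM s).maker } := by
      intro s
      rcases hmaker s with ⟨t, _, _, heq⟩ | ⟨h1, _⟩
      · right; rw [heq]
      · left; exact h1
    -- maker step does not change the breaker
    have hmk_breaker : ∀ s : DynPos α,
        (makerDynStep (Finset.univ : Finset α) p SM s).breaker = s.breaker := by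
      intro s
      rcases hSM : SM s with t | t
      · simp only [makerDynStep, hSM]
        split <;> rfl
      · simp only [makerDynStep, hSM]
    -- disjointness invariant
    have hdisj : ∀ i, Disjoint (st i).maker (st i).breaker := by
      intro i
      induction i with
      | zero => rw [hst0]; simp
      | succ i ih =>
        have hmd : Disjoint (makerDynStep (Finset.univ : Finset α) p SM (st i)).maker
            (makerDynStep (Finset.univ : Finset α) p SM (st i)).breaker := by
          rcases hmaker (st i) with ⟨t, ht, -, heq⟩ | ⟨h1, h2⟩
          · rw [heq]
            show Disjoint ((st i).maker ∪ t) (st i).breaker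
            rw [Finset.disjoint_union_left]
            refine ⟨ih, ?_⟩
            refine Finset.disjoint_left.2 fun x hx hxB => ?_
            have := ht hx
            rw [DynPos.unclaimed, Finset.mem_sdiff, Finset.mem_union] at this
            exact this.2 (Or.inr hxB)
          · rw [h1, h2]; exact ih
        rw [hst_succ i, hbreak (makerDynStep (Finset.univ : Finset α) p SM (st i))]
        show Disjoint (makerDynStep (Finset.univ : Finset α) p SM (st i)).maker
          ((makerDynStep (Finset.univ : Finset α) p SM (st i)).breaker
            ∪ SB (makerDynStep (Finset.univ : Finset α) p SM (st i)))
        rw [Finset.disjoint_union_right]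
        refine ⟨hmd, ?_⟩
        refine Finset.disjoint_left.2 fun x hxM hxS => ?_
        have hxS' : x ∈ S14.greedy E p q
            (makerDynStep (Finset.univ : Finset α) p SM (st i)).maker q
            (makerDynStep (Finset.univ : Finset α) p SM (st i)).breaker
            (makerDynStep (Finset.univ : Finset α) p SM (st i)).unclaimed := hxS
        have := S14.greedy_subset E p q _ q _ _ hxS'
        rw [DynPos.unclaimed, Finset.mem_sdiff, Finset.mem_union] at this
        exact this.2 (Or.inl hxM)
    -- the key potential invariant
    set Φ₀ : ℝ := S14.phi E p q (∅ : Finset α) (∅ : Finset α) with hΦ₀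
    have hΦ₀nn : 0 ≤ Φ₀ := S14.phi_nonneg E p q ∅ ∅
    have key : ∀ i,
        S14.phi E p q (makerDynStep (Finset.univ : Finset α) p SM (st i)).maker
            (makerDynStep (Finset.univ : Finset α) p SM (st i)).breaker
          ≤ (1 + (q:ℝ)) * Φ₀ := by
      intro i
      induction i with
      | zero =>
        have hun : (st 0).unclaimed = ∅ := rfl
        have h0 : S14.phi E p q (st 0).maker (st 0).breaker = Φ₀ := rfl
        rcases hmaker (st 0) with ⟨t, ht, -, heq⟩ | ⟨h1, h2⟩
        · have htempty : t = ∅ := Finset.subset_empty.1 (hun ▸ ht)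
          subst htempty
          rw [heq]
          show S14.phi E p q ((st 0).maker ∪ ∅) (st 0).breaker ≤ _
          rw [Finset.union_empty, h0]
          nlinarith
        · rw [h1, h2, h0]
          nlinarith
      | succ i ih =>
        set s := st i with hs
        set mid := makerDynStep (Finset.univ : Finset α) p SM s with hmid
        have hs1 : st (i+1) = { mid with breaker := mid.breaker ∪ SB mid } := by
          rw [hst_succ i, hbreak mid]
        set s1 := st (i+1) with hs1d
        have hs1m : s1.maker = mid.maker := by rw [hs1]
        have hs1b : s1.breaker = mid.breaker ∪ SB mid := by rw [hs1]
        have hs1bo : s1.board = mid.board := by rw [hs1]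
        have hphis1 : S14.phi E p q s1.maker s1.breaker
            ≤ S14.phi E p q mid.maker mid.breaker := by
          rw [hs1m, hs1b]
          exact S14.phi_mono Finset.subset_union_left
        rcases hmaker s1 with ⟨t, ht, htc, heq⟩ | ⟨h1, h2⟩
        · rw [heq]
          show S14.phi E p q (s1.maker ∪ t) s1.breaker ≤ _
          rcases Finset.eq_empty_or_nonempty t with rfl | hne
          · rw [Finset.union_empty]
            exact le_trans hphis1 ih
          · obtain ⟨x, hx, hxmax⟩ :=
              Finset.exists_max_image t (S14.wt E p q s1.maker s1.breaker) hne
            have hdisjt : Disjoint t s1.maker := by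
              refine Finset.disjoint_left.2 fun y hy hyM => ?_
              have := ht hy
              rw [DynPos.unclaimed, Finset.mem_sdiff, Finset.mem_union] at this
              exact this.2 (Or.inl hyM)
            have hstep := S14.phi_maker (E := E) (q := q) hp0 htc hdisjt
              (B := s1.breaker)
            have hsum : ∑ a ∈ t, S14.wt E p q s1.maker s1.breaker a
                ≤ (p:ℝ) * S14.wt E p q s1.maker s1.breaker x := by
              calc ∑ a ∈ t, S14.wt E p q s1.maker s1.breaker a
                  ≤ ∑ _a ∈ t, S14.wt E p q s1.maker s1.breaker x :=
                    Finset.sum_le_sum fun a ha => hxmax a ha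
                _ = (t.card : ℝ) * S14.wt E p q s1.maker s1.breaker x := by
                    rw [Finset.sum_const, nsmul_eq_mul]
                _ ≤ (p:ℝ) * S14.wt E p q s1.maker s1.breaker x := by
                    have := S14.wt_nonneg E p q s1.maker s1.breaker x
                    have hcp : (t.card : ℝ) ≤ (p:ℝ) := by exact_mod_cast htc
                    nlinarith
            -- locate x inside mid's unclaimed set, outside the greedy picks
            have hxun := ht hx
            rw [DynPos.unclaimed, Finset.mem_sdiff, Finset.mem_union] at hxun
            have hxG : x ∉ SB mid := fun hxG => hxun.2 (Or.inr (by
              rw [hs1b]; exact Finset.mem_union_right _ hxG))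
            have hxU : x ∈ mid.unclaimed := by
              rw [DynPos.unclaimed, Finset.mem_sdiff, Finset.mem_union]
              refine ⟨by rw [← hs1bo]; exact hxun.1, ?_⟩
              rintro (hxm | hxb)
              · exact hxun.2 (Or.inl (by rw [hs1m]; exact hxm))
              · exact hxun.2 (Or.inr (by rw [hs1b]; exact Finset.mem_union_left _ hxb))
            have hgk := S14.greedy_key E p q mid.maker q mid.breaker mid.unclaimed x hxU hxG
            have hSBmid : SB mid
                = S14.greedy E p q mid.maker q mid.breaker mid.unclaimed := rfl
            rw [← hSBmid] at hgk
            -- rewrite in terms of s1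
            rw [← hs1m, ← hs1b] at hgk
            have hq_div : (q:ℝ)/(p:ℝ) * ((p:ℝ) * S14.wt E p q s1.maker s1.breaker x)
                = (q:ℝ) * S14.wt E p q s1.maker s1.breaker x := by
              field_simp
            have hwnn := S14.wt_nonneg E p q s1.maker s1.breaker x
            have hqp : (0:ℝ) ≤ (q:ℝ)/(p:ℝ) := by positivity
            calc S14.phi E p q (s1.maker ∪ t) s1.breaker
                ≤ S14.phi E p q s1.maker s1.breaker
                  + (q:ℝ)/(p:ℝ) * ∑ a ∈ t, S14.wt E p q s1.maker s1.breaker a := hstep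
              _ ≤ S14.phi E p q s1.maker s1.breaker
                  + (q:ℝ) * S14.wt E p q s1.maker s1.breaker x := by
                  rw [← hq_div]
                  have := mul_le_mul_of_nonneg_left hsum hqp
                  linarith
              _ ≤ S14.phi E p q s1.maker mid.breaker := by linarith [hgk]
              _ = S14.phi E p q mid.maker mid.breaker := by rw [hs1m]
              _ ≤ (1 + (q:ℝ)) * Φ₀ := ih
        · rw [h1, h2]
          exact le_trans hphis1 ih
    -- conclude
    have hfin : dynFinal (Finset.univ : Finset α) p q SM SB = st (dynLength (Finset.univ : Finset α)) := rfl
    obtain ⟨k, hk⟩ : ∃ k, dynLength (Finset.univ : Finset α) = k + 1 :=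
      ⟨2 * (Finset.univ : Finset α).card, rfl⟩
    set fin := st (dynLength (Finset.univ : Finset α)) with hfind
    have hfphi : S14.phi E p q fin.maker fin.breaker ≤ (1 + (q:ℝ)) * Φ₀ := by
      rw [hfind, hk, hst_succ k,
        hbreak (makerDynStep (Finset.univ : Finset α) p SM (st k))]
      show S14.phi E p q (makerDynStep (Finset.univ : Finset α) p SM (st k)).maker
          ((makerDynStep (Finset.univ : Finset α) p SM (st k)).breaker
            ∪ SB (makerDynStep (Finset.univ : Finset α) p SM (st k))) ≤ _
      exact le_trans (S14.phi_mono Finset.subset_union_left) (key k)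
    have hdisjf : Disjoint fin.maker fin.breaker := hdisj _
    have hcount : ((E.filter (fun W => W ⊆ fin.maker)).card : ℝ)
        ≤ S14.phi E p q fin.maker fin.breaker := by
      have h1 : ∀ W ∈ E.filter (fun W => W ⊆ fin.maker),
          S14.trm p q fin.maker fin.breaker W = 1 := by
        intro W hW
        rw [Finset.mem_filter] at hW
        unfold S14.trm
        rw [if_neg, Finset.sdiff_eq_empty_iff_subset.2 hW.2]
        · norm_num
        · rintro ⟨x, hx⟩
          rw [Finset.mem_inter] at hx
          exact Finset.disjoint_left.1 hdisjf (hW.2 hx.1) hx.2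
      calc ((E.filter (fun W => W ⊆ fin.maker)).card : ℝ)
          = ∑ W ∈ E.filter (fun W => W ⊆ fin.maker),
              S14.trm p q fin.maker fin.breaker W := by
            rw [Finset.sum_congr rfl h1, Finset.sum_const, nsmul_eq_mul, mul_one]
        _ ≤ S14.phi E p q fin.maker fin.breaker :=
            Finset.sum_le_sum_of_subset_of_nonneg (Finset.filter_subset _ _)
              (fun W _ _ => S14.trm_nonneg p q fin.maker fin.breaker W)
    have hΦ₀eq : Φ₀ = ∑ W ∈ E, ((1 + (q : ℝ)) ^ (-((W.card : ℝ) / (p : ℝ)))) := by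
      rw [hΦ₀]
      unfold S14.phi
      refine Finset.sum_congr rfl fun W _ => ?_
      unfold S14.trm
      rw [if_neg (by simp), Finset.sdiff_empty]
    rw [← hΦ₀eq]
    exact le_trans hcount hfphi
end
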